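/- For every x ∈ (0, π/2), the function (x/sin x)² + x/tan x admits the convergent series representation (x/sin x)² + x/tan x = 2 + Σ_{k=2}^{∞} (|B_{2k}|·(2k-2)·4^k/(2k)!)·x^{2k}, where every coefficient |B_{2k}|·(2k-2)·4^k/(2k)! is positive for k ≥ 2. -/

import Mathlib

/-!
The Bernoulli generating function `z / (eᶻ - 1) = ∑ Bₙ zⁿ / n!` converges for `0 < ‖z‖ < 2π`,
since Euler's formula `ζ(2k) = (-1)^(k+1) (2π)^(2k) B₂ₖ / (2 (2k)!)` with `1 ≤ ζ(2k) ≤ π²/6`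
bounds `|B₂ₖ| / (2k)!` by `(π²/3) / (2π)^(2k)` and also gives the sign of `B₂ₖ`. At `z = 2ix`
its even part is `x cot x = ∑ cₖ x^(2k)` with `cₖ = B₂ₖ (-4)^k / (2k)!`. Writing `F(x) = x cot x`,
`(x / sin x)² + x cot x = 2 F(x) - x F'(x)`, so termwise differentiation gives the coefficients
`(2 - 2k) cₖ = |B₂ₖ| (2k - 2) 4^k / (2k)!`.
-/

open Real Finset

/-- The coefficient `|B_{2k}|·(2k-2)·4^k/(2k)!`, where `B_{2k}` is a Bernoulli number. -/
noncomputable def wchE (k : ℕ) : ℝ :=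
  |((bernoulli (2 * k) : ℚ) : ℝ)| * (2 * (k : ℝ) - 2) * (4 : ℝ) ^ k /
    (Nat.factorial (2 * k) : ℝ)

open scoped Nat

lemma hasSum_one_div_nat_pow_two_mul {k : ℕ} (hk : k ≠ 0) :
    HasSum (fun n : ℕ => 1 / (n : ℝ) ^ (2 * k))
      ((-1) ^ (k + 1) * (bernoulli (2 * k) : ℝ) * ((2 * π) ^ (2 * k) / (2 * (2 * k)!))) := by
  convert hasSum_zeta_nat hk using 1
  have h2 : (2 : ℝ) ^ (2 * k) = 2 ^ (2 * k - 1) * 2 := by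
    rw [← pow_succ, Nat.sub_add_cancel (by omega)]
  rw [mul_pow, h2]
  ring

lemma neg_one_pow_mul_bernoulli_two_mul_pos {k : ℕ} (hk : k ≠ 0) :
    0 < (-1) ^ (k + 1) * (bernoulli (2 * k) : ℝ) := by
  have h := le_hasSum (hasSum_one_div_nat_pow_two_mul hk) 1 fun _ _ => by positivity
  rw [Nat.cast_one, one_pow, div_one] at h
  exact pos_of_mul_pos_left (one_pos.trans_le h) (by positivity)

lemma abs_bernoulli_two_mul {k : ℕ} (hk : k ≠ 0) :
    |(bernoulli (2 * k) : ℝ)| = (-1) ^ (k + 1) * bernoulli (2 * k) := by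
  rw [← abs_of_pos (neg_one_pow_mul_bernoulli_two_mul_pos hk), abs_mul, abs_neg_one_pow, one_mul]

lemma abs_bernoulli_two_mul_le {k : ℕ} (hk : k ≠ 0) :
    |(bernoulli (2 * k) : ℝ)| ≤ π ^ 2 / 3 * (2 * k)! / (2 * π) ^ (2 * k) := by
  have h := hasSum_le (fun n : ℕ => ?_) (hasSum_one_div_nat_pow_two_mul hk) hasSum_zeta_two
  · rw [← abs_bernoulli_two_mul hk] at h
    rw [le_div_iff₀ (by positivity)]
    field_simp at h
    linarith
  rcases n.eq_zero_or_pos with rfl | hn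
  · simp [hk]
  · exact one_div_le_one_div_of_le (by positivity)
      (pow_le_pow_right₀ (by exact_mod_cast hn) (by omega))

lemma abs_bernoulli_mul_pow_div_factorial_le (n : ℕ) {r : ℝ} (hr : 0 ≤ r) :
    |(bernoulli n : ℝ)| * r ^ n / n ! ≤ π ^ 2 / 3 * (r / (2 * π)) ^ n := by
  have hπ := pi_gt_three
  obtain ⟨k, rfl | rfl⟩ := n.even_or_odd'
  · rcases eq_or_ne k 0 with rfl | hk
    · simp only [mul_zero, bernoulli_zero, Rat.cast_one, abs_one, pow_zero, mul_one,
        Nat.factorial_zero, Nat.cast_one, div_one]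
      nlinarith
    · calc |(bernoulli (2 * k) : ℝ)| * r ^ (2 * k) / (2 * k)!
          ≤ π ^ 2 / 3 * (2 * k)! / (2 * π) ^ (2 * k) * r ^ (2 * k) / (2 * k)! := by
            gcongr; exact abs_bernoulli_two_mul_le hk
        _ = π ^ 2 / 3 * (r / (2 * π)) ^ (2 * k) := by rw [div_pow]; field_simp
  · rcases eq_or_ne k 0 with rfl | hk
    · simp only [mul_zero, zero_add, bernoulli_one, pow_one, Nat.factorial_one, Nat.cast_one,
        div_one]
      rw [show |((-1 / 2 : ℚ) : ℝ)| = 1 / 2 by norm_num]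
      field_simp
      nlinarith
    · rw [bernoulli_eq_zero_of_odd (odd_two_mul_add_one k) (by omega)]
      simp only [Rat.cast_zero, abs_zero, zero_mul, zero_div]
      positivity

lemma summable_abs_bernoulli_mul_pow_div_factorial {r : ℝ} (hr0 : 0 ≤ r) (hr : r < 2 * π) :
    Summable fun n : ℕ => |(bernoulli n : ℝ)| * r ^ n / n ! := by
  refine .of_nonneg_of_le (fun n => by positivity)
    (fun n => abs_bernoulli_mul_pow_div_factorial_le n hr0)
    ((summable_geometric_of_lt_one (by positivity) ?_).mul_left _)
  rwa [div_lt_one (by positivity)]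

lemma sum_antidiagonal_bernoulli_mul_exp_sub_one (n : ℕ) :
    ∑ p ∈ antidiagonal n, bernoulli p.1 / p.1 ! * (1 / (p.2 ! : ℚ) - if p.2 = 0 then 1 else 0) =
      if n = 1 then 1 else 0 := by
  have h := congrArg (PowerSeries.coeff (R := ℚ) n) (bernoulliPowerSeries_mul_exp_sub_one ℚ)
  rw [PowerSeries.coeff_mul, PowerSeries.coeff_X] at h
  rw [← h]
  refine sum_congr rfl fun p _ => ?_
  simp [bernoulliPowerSeries, PowerSeries.coeff_one]

lemma Complex.exp_ne_one_of_ne_zero_of_norm_lt {z : ℂ} (hz0 : z ≠ 0) (hz : ‖z‖ < 2 * π) :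
    exp z ≠ 1 := by
  rw [Ne, exp_eq_one_iff]
  rintro ⟨n, rfl⟩
  have hn : n ≠ 0 := by rintro rfl; simp at hz0
  rw [norm_mul, norm_mul, norm_mul, norm_intCast, norm_ofNat, norm_real, norm_I,
    Real.norm_of_nonneg pi_pos.le, mul_one] at hz
  have : (1 : ℝ) ≤ |(n : ℝ)| := by exact_mod_cast Int.one_le_abs hn
  nlinarith [pi_pos]

lemma Complex.hasSum_bernoulli_div_factorial_mul_pow {z : ℂ} (hz0 : z ≠ 0)
    (hz : ‖z‖ < 2 * π) :
    HasSum (fun n : ℕ => (bernoulli n : ℂ) / n ! * z ^ n) (z / (exp z - 1)) := by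
  set f : ℕ → ℂ := fun n => (bernoulli n : ℂ) / n ! * z ^ n
  set e : ℕ → ℂ := fun n => z ^ n / (n ! : ℂ) - if n = 0 then 1 else 0
  have hf_norm : Summable fun n => ‖f n‖ := by
    convert summable_abs_bernoulli_mul_pow_div_factorial (norm_nonneg z) hz using 2 with n
    simp only [Complex.norm_mul, Complex.norm_div, norm_ratCast, RCLike.norm_natCast, norm_pow, f]
    ring
  have he : HasSum e (exp z - 1) := by
    rw [exp_eq_exp_ℂ]
    exact (NormedSpace.expSeries_div_hasSum_exp z).sub (hasSum_ite_eq 0 1)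
  have he_norm : Summable fun n => ‖e n‖ := by
    refine .of_nonneg_of_le (fun n => norm_nonneg _) (fun n => ?_)
      (Real.summable_pow_div_factorial ‖z‖)
    rcases n with _ | n <;> simp [e]
  have hprod : ∀ n, ∑ p ∈ antidiagonal n, f p.1 * e p.2 = if n = 1 then z else 0 := by
    intro n
    calc ∑ p ∈ antidiagonal n, f p.1 * e p.2
        = ∑ p ∈ antidiagonal n, ((bernoulli p.1 / p.1 ! *
            (1 / (p.2 ! : ℚ) - if p.2 = 0 then 1 else 0) : ℚ) : ℂ) * z ^ n := by
          refine sum_congr rfl fun p hp => ?_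
          rw [← mem_antidiagonal.1 hp, pow_add]
          by_cases h : p.2 = 0
          · simp [f, e, h]
          · simp only [h, ↓reduceIte, sub_zero, one_div, Rat.cast_mul, Rat.cast_div,
              Rat.cast_natCast, Rat.cast_inv, f, e]
            ring
      _ = if n = 1 then z else 0 := by
          rw [← sum_mul, ← Rat.cast_sum, sum_antidiagonal_bernoulli_mul_exp_sub_one]
          split_ifs with h <;> simp [h]
  have hcauchy := tsum_mul_tsum_eq_tsum_sum_antidiagonal_of_summable_norm hf_norm he_norm
  rw [he.tsum_eq, funext hprod, tsum_ite_eq,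
    ← eq_div_iff (sub_ne_zero.2 (exp_ne_one_of_ne_zero_of_norm_lt hz0 hz))] at hcauchy
  rw [← hcauchy]
  exact hf_norm.of_norm.hasSum

lemma Complex.hasSum_bernoulli_two_mul_div_factorial_mul_pow {z : ℂ} (hz0 : z ≠ 0)
    (hz : ‖z‖ < 2 * π) :
    HasSum (fun k : ℕ => (bernoulli (2 * k) : ℂ) / (2 * k)! * z ^ (2 * k))
      (z / (exp z - 1) + z / 2) := by
  set f : ℕ → ℂ := fun n => (bernoulli n : ℂ) / n ! * z ^ n
  have hodd : ∀ n ∉ Set.range (2 * ·), Function.update f 1 0 n = 0 := by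
    rintro n hn
    obtain ⟨k, rfl | rfl⟩ := n.even_or_odd'
    · exact absurd ⟨k, rfl⟩ hn
    rcases eq_or_ne k 0 with rfl | hk
    · simp
    rw [Function.update_of_ne (by omega)]
    simp [f, bernoulli_eq_zero_of_odd (odd_two_mul_add_one k) (by omega)]
  have h := (hasSum_bernoulli_div_factorial_mul_pow hz0 hz).update 1 0
  rw [← (mul_right_injective₀ two_ne_zero).hasSum_iff hodd] at h
  convert h using 1
  · ext k
    simp [f]
  · simp only [bernoulli_one, Rat.cast_div, Rat.cast_neg, Rat.cast_one, Rat.cast_ofNat,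
      Nat.factorial_one, Nat.cast_one, div_one, pow_one, zero_sub]
    ring

noncomputable def cotCoeff (k : ℕ) : ℝ :=
  bernoulli (2 * k) * (-4) ^ k / (2 * k)!

lemma Complex.hasSum_cotCoeff_mul_pow {z : ℂ} (hz0 : z ≠ 0) (hz : ‖z‖ < π) :
    HasSum (fun k : ℕ => (cotCoeff k : ℂ) * z ^ (2 * k)) (z * cot z) := by
  have hw0 : 2 * I * z ≠ 0 := by simp [hz0, I_ne_zero]
  have hw : ‖2 * I * z‖ < 2 * π := by simpa using hz
  have hexp := sub_ne_zero.2 (exp_ne_one_of_ne_zero_of_norm_lt hw0 hw)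
  convert hasSum_bernoulli_two_mul_div_factorial_mul_pow hw0 hw using 1
  · ext k
    have hsq : (2 * I * z) ^ 2 = -4 * z ^ 2 := by linear_combination 4 * z ^ 2 * I_sq
    rw [cotCoeff, pow_mul, pow_mul, hsq, mul_pow]
    push_cast
    ring
  · rw [cot_eq_exp_ratio]
    generalize exp (2 * I * z) = w at hexp ⊢
    have : 1 - w ≠ 0 := fun h => hexp (by linear_combination -h)
    field_simp
    linear_combination (w - 1) * (w + 1) * I_sq

lemma hasSum_cotCoeff_mul_pow {x : ℝ} (hx0 : x ≠ 0) (hx : |x| < π) :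
    HasSum (fun k : ℕ => cotCoeff k * x ^ (2 * k)) (x * cos x / sin x) := by
  rw [mul_div_assoc, ← Real.cot_eq_cos_div_sin, ← Complex.hasSum_ofReal]
  push_cast [Complex.ofReal_cot]
  exact Complex.hasSum_cotCoeff_mul_pow (by exact_mod_cast hx0) (by simpa using hx)

lemma abs_cotCoeff_le (k : ℕ) : |cotCoeff k| ≤ π ^ 2 / 3 / π ^ (2 * k) := by
  have h := abs_bernoulli_mul_pow_div_factorial_le (2 * k) zero_le_two
  calc |cotCoeff k| = |(bernoulli (2 * k) : ℝ)| * 2 ^ (2 * k) / (2 * k)! := by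
        rw [cotCoeff, abs_div, abs_mul, abs_pow, abs_neg, Nat.abs_cast, pow_mul]
        norm_num
    _ ≤ π ^ 2 / 3 * (2 / (2 * π)) ^ (2 * k) := h
    _ = π ^ 2 / 3 / π ^ (2 * k) := by
        rw [div_mul_cancel_left₀ two_ne_zero, inv_pow, div_eq_mul_inv (π ^ 2 / 3)]

lemma summable_abs_cotCoeff_mul_pow_sub_one {r : ℝ} (hr0 : 0 < r) (hr : r < π) :
    Summable fun k : ℕ => |cotCoeff k| * (2 * k) * r ^ (2 * k - 1) := by
  have hq : ‖(r / π) ^ 2‖ < 1 := by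
    rw [norm_pow, Real.norm_of_nonneg (by positivity)]
    exact pow_lt_one₀ (by positivity) ((div_lt_one pi_pos).2 hr) two_ne_zero
  refine .of_nonneg_of_le (fun k => by positivity) (fun k => ?_)
    ((summable_pow_mul_geometric_of_norm_lt_one 1 hq).mul_left (2 * π ^ 2 / (3 * r)))
  rcases k with _ | k
  · simp
  rw [show 2 * (k + 1) - 1 = 2 * k + 1 by omega]
  calc |cotCoeff (k + 1)| * (2 * ↑(k + 1)) * r ^ (2 * k + 1)
      ≤ π ^ 2 / 3 / π ^ (2 * (k + 1)) * (2 * ↑(k + 1)) * r ^ (2 * k + 1) := by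
        gcongr
        exact abs_cotCoeff_le _
    _ = 2 * π ^ 2 / (3 * r) * ((k + 1 : ℕ) ^ 1 * ((r / π) ^ 2) ^ (k + 1)) := by
        rw [← pow_mul, div_pow]
        field_simp
        ring

lemma hasDerivAt_tsum_mul_pow_two_mul {c : ℕ → ℝ} {r x : ℝ}
    (hc : Summable fun k : ℕ => |c k| * (2 * k) * r ^ (2 * k - 1)) (hx : |x| < r) :
    HasDerivAt (fun y => ∑' k, c k * y ^ (2 * k)) (∑' k, c k * (2 * k) * x ^ (2 * k - 1)) x ∧
      Summable fun k : ℕ => c k * (2 * k) * x ^ (2 * k - 1) := by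
  have hderiv (k : ℕ) (y : ℝ) :
      HasDerivAt (fun y => c k * y ^ (2 * k)) (c k * (2 * k) * y ^ (2 * k - 1)) y :=
    ((hasDerivAt_pow (2 * k) y).const_mul (c k)).congr_deriv (by push_cast; ring)
  have hbound (k : ℕ) (y : ℝ) (hy : y ∈ Set.Ioo (-r) r) :
      ‖c k * (2 * k) * y ^ (2 * k - 1)‖ ≤ |c k| * (2 * k) * r ^ (2 * k - 1) := by
    rw [norm_mul, norm_mul, norm_pow, Real.norm_eq_abs, Real.norm_of_nonneg (by positivity)]
    gcongr
    exact (abs_lt.2 hy).le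
  have hx' : x ∈ Set.Ioo (-r) r := abs_lt.1 hx
  have h0 : (0 : ℝ) ∈ Set.Ioo (-r) r := ⟨by linarith [abs_nonneg x], by linarith [abs_nonneg x]⟩
  refine ⟨hasDerivAt_tsum_of_isPreconnected hc isOpen_Ioo isPreconnected_Ioo
    (fun k y _ => hderiv k y) hbound h0 ?_ hx', .of_norm_bounded hc (hbound · x hx')⟩
  exact summable_of_ne_finset_zero (s := {0}) fun k hk => by simp_all

lemma hasSum_two_sub_two_mul_cotCoeff_mul_pow {x : ℝ} (hx0 : x ≠ 0) (hx : |x| < π) :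
    HasSum (fun k : ℕ => (2 - 2 * k) * cotCoeff k * x ^ (2 * k))
      ((x / sin x) ^ 2 + x * cos x / sin x) := by
  have hsin : sin x ≠ 0 := by
    rw [Ne, sin_eq_zero_iff_of_lt_of_lt (abs_lt.1 hx).1 (abs_lt.1 hx).2]
    exact hx0
  have hr : |x| < (|x| + π) / 2 ∧ (|x| + π) / 2 < π := by constructor <;> linarith
  obtain ⟨hF', hsum⟩ := hasDerivAt_tsum_mul_pow_two_mul
    (summable_abs_cotCoeff_mul_pow_sub_one (by positivity) hr.2) hr.1
  have hF : (fun y => ∑' k, cotCoeff k * y ^ (2 * k)) =ᶠ[nhds x] fun y => y * cos y / sin y := by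
    filter_upwards [(isOpen_ne.inter (isOpen_lt continuous_abs continuous_const)).mem_nhds
      ⟨hx0, hx⟩] with y hy using (hasSum_cotCoeff_mul_pow hy.1 hy.2).tsum_eq
  have hderiv : HasDerivAt (fun y => y * cos y / sin y) (cos x / sin x - x / sin x ^ 2) x := by
    refine (((hasDerivAt_id' x).fun_mul (hasDerivAt_cos x)).div (hasDerivAt_sin x) hsin)
      |>.congr_deriv ?_
    field_simp
    linear_combination -x * sin_sq_add_cos_sq x
  have hD := hsum.hasSum
  rw [(hF.hasDerivAt_iff.1 hF').unique hderiv] at hD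
  have h := ((hasSum_cotCoeff_mul_pow hx0 hx).mul_left 2).sub (hD.mul_left x)
  rw [show 2 * (x * cos x / sin x) - x * (cos x / sin x - x / sin x ^ 2) =
    (x / sin x) ^ 2 + x * cos x / sin x by field_simp; ring] at h
  refine h.congr_fun fun k => ?_
  rcases k with _ | k
  · simp
  · rw [show 2 * (k + 1) = 2 * k + 1 + 1 by ring, Nat.add_sub_cancel, pow_succ]
    push_cast
    ring

lemma wchE_eq_two_sub_two_mul_cotCoeff {k : ℕ} (hk : k ≠ 0) :
    wchE k = (2 - 2 * k) * cotCoeff k := by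
  rw [wchE, cotCoeff, abs_bernoulli_two_mul hk, neg_pow (4 : ℝ)]
  ring

lemma wchE_pos {k : ℕ} (hk : 2 ≤ k) : 0 < wchE k := by
  have hB := neg_one_pow_mul_bernoulli_two_mul_pos (show k ≠ 0 by omega)
  have hk' : (2 : ℝ) < 2 * k := by norm_cast; omega
  rw [wchE, abs_bernoulli_two_mul (by omega)]
  exact div_pos (mul_pos (mul_pos hB (by linarith)) (by positivity)) (by positivity)

/-- For every `x ∈ (0, π/2)`,
`(x/sin x)² + x/tan x = 2 + Σ_{k=2}^∞ |B_{2k}|(2k-2)4^k/(2k)! · x^(2k)` (the sum below is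
indexed so that `k + 2` runs over `2, 3, 4, …`), and all the coefficients are positive. -/
theorem x_div_sinx_sq_add_x_div_tanx_series :
    (∀ x ∈ Set.Ioo (0 : ℝ) (π / 2),
      HasSum (fun k : ℕ => wchE (k + 2) * x ^ (2 * (k + 2)))
        ((x / Real.sin x) ^ 2 + x * Real.cos x / Real.sin x - 2)) ∧
    ∀ k : ℕ, 2 ≤ k → 0 < wchE k := by
  constructor
  · rintro x ⟨hx0, hx⟩
    have h := hasSum_two_sub_two_mul_cotCoeff_mul_pow hx0.ne'
      (by rw [abs_of_pos hx0]; linarith [pi_pos])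
    rw [← hasSum_nat_add_iff' 2] at h
    have h2 : ∑ i ∈ range 2, (2 - 2 * (i : ℝ)) * cotCoeff i * x ^ (2 * i) = 2 := by
      simp [sum_range_succ, cotCoeff]
    rw [h2] at h
    exact h.congr_fun fun k => by rw [wchE_eq_two_sub_two_mul_cotCoeff (by omega)]
  · exact fun k hk => wchE_pos hk
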